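/- Let x = Σ_{l=1}^K x_l be a multicomponent signal with each x̂_l(η) = B_l(η)e^{-i2πθ_l(η)} satisfying |B_l'| ≤ ε₁ and |θ_l'''| ≤ ε₂. Then |D_x^{ξ^m g}(t,η,γ) - Σ_{l=1}^K x̂_l(η) C(ξ^m g)(θ_l'(η) - t, θ_l''(η) - γ)| ≤ ε₁ K I_{m+1} + (π/3) ε₂ M(η) I_{m+3}, where M(η) = Σ_l B_l(η). -/

import Mathlib

open Real MeasureTheory

noncomputable def cexp (x : ℝ) : ℂ := Complex.exp (Complex.I * (x : ℂ))

lemma cexp_norm (x : ℝ) : ‖cexp x‖ = 1 := by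
  simp [cexp, Complex.norm_exp, Complex.mul_re]

lemma cexp_add (a b : ℝ) : cexp (a + b) = cexp a * cexp b := by
  unfold cexp
  rw [← Complex.exp_add]
  congr 1
  push_cast
  ring

lemma hasDerivAt_cexp (x : ℝ) : HasDerivAt cexp (Complex.I * cexp x) x := by
  have h1 : HasDerivAt (fun z : ℂ => Complex.exp (Complex.I * z))
      (Complex.exp (Complex.I * (x : ℂ)) * Complex.I) (x : ℂ) := by
    have h0 := (Complex.hasDerivAt_exp (Complex.I * (x:ℂ))).comp (x:ℂ)
      ((hasDerivAt_id (x:ℂ)).const_mul Complex.I)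
    rw [mul_one] at h0
    exact h0
  have := h1.comp_ofReal
  rw [mul_comm] at this
  exact this

lemma cexp_lip (a b : ℝ) : ‖cexp a - cexp b‖ ≤ |a - b| := by
  have h := convex_univ.norm_image_sub_le_of_norm_deriv_le
    (f := cexp) (C := 1)
    (fun x _ => (hasDerivAt_cexp x).differentiableAt)
    (fun x _ => by
      rw [(hasDerivAt_cexp x).deriv, norm_mul, Complex.norm_I, one_mul, cexp_norm])
    (Set.mem_univ b) (Set.mem_univ a)
  simpa [Real.norm_eq_abs] using h

lemma T1 {f f' : ℝ → ℝ} {C η : ℝ} {k : ℕ}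
    (hd : ∀ x, HasDerivAt f (f' x) x) (hc : Continuous f')
    (hb : ∀ x, |f' x| ≤ C * |x - η| ^ k) (h0 : f η = 0) (x : ℝ) :
    |f x| ≤ C * |x - η| ^ (k + 1) / (k + 1) := by
  have hint : IntervalIntegrable f' volume η x := hc.intervalIntegrable η x
  have hfx : f x = ∫ u in η..x, f' u := by
    rw [intervalIntegral.integral_eq_sub_of_hasDerivAt (fun u _ => hd u) hint, h0, sub_zero]
  rw [hfx, ← Real.norm_eq_abs]
  have hg : Continuous fun u : ℝ => C * |u - η| ^ k := by
    apply continuous_const.mul (((continuous_id.sub continuous_const).abs).pow k)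
  calc ‖∫ u in η..x, f' u‖ ≤ ∫ u in Set.uIoc η x, ‖f' u‖ :=
        intervalIntegral.norm_integral_le_integral_norm_uIoc
    _ ≤ ∫ u in Set.uIoc η x, C * |u - η| ^ k := by
        apply setIntegral_mono_on
        · exact (intervalIntegrable_iff.mp (hc.norm.intervalIntegrable η x))
        · exact (intervalIntegrable_iff.mp (hg.intervalIntegrable η x))
        · exact measurableSet_uIoc
        · intro u _; simpa [Real.norm_eq_abs] using hb u
    _ = C * (|x - η| ^ (k + 1) / (k + 1)) := by
        rw [integral_const_mul, integral_pow_abs_sub_uIoc]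
    _ = C * |x - η| ^ (k + 1) / (k + 1) := by ring

lemma taylor3 {θ : ℝ → ℝ} {ε₂ : ℝ} (hθ : ContDiff ℝ 3 θ)
    (h3 : ∀ x, |iteratedDeriv 3 θ x| ≤ ε₂) (η x : ℝ) :
    |θ x - θ η - deriv θ η * (x - η) - iteratedDeriv 2 θ η * (x - η) ^ 2 / 2|
      ≤ ε₂ * |x - η| ^ 3 / 6 := by
  have hdθ : Differentiable ℝ θ := hθ.differentiable (by norm_num)
  have e23 : (2 + 1 : WithTop ℕ∞) = 3 := by norm_num
  have e12 : (1 + 1 : WithTop ℕ∞) = 2 := by norm_num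
  have e01 : (0 + 1 : WithTop ℕ∞) = 1 := by norm_num
  have h2 : ContDiff ℝ 2 (deriv θ) := (contDiff_succ_iff_deriv.mp (e23 ▸ hθ)).2.2
  have h1 : ContDiff ℝ 1 (deriv (deriv θ)) := (contDiff_succ_iff_deriv.mp (e12 ▸ h2)).2.2
  have h0 : ContDiff ℝ 0 (deriv (deriv (deriv θ))) := (contDiff_succ_iff_deriv.mp (e01 ▸ h1)).2.2
  have cont3 : Continuous (deriv (deriv (deriv θ))) := contDiff_zero.mp h0
  have i2 : iteratedDeriv 2 θ = deriv (deriv θ) := by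
    rw [iteratedDeriv_succ, iteratedDeriv_one]
  have i3 : iteratedDeriv 3 θ = deriv (deriv (deriv θ)) := by
    rw [iteratedDeriv_succ, i2]
  have s1 := T1 (f := fun y => deriv (deriv θ) y - deriv (deriv θ) η)
      (f' := deriv (deriv (deriv θ))) (C := ε₂) (η := η) (k := 0)
      (fun y => ((h1.differentiable one_ne_zero y).hasDerivAt).sub_const _)
      cont3
      (fun y => by simp only [pow_zero, mul_one, ← i3]; exact h3 y)
      (by simp)
  have s2 := T1 (f := fun y => deriv θ y - deriv θ η - deriv (deriv θ) η * (y - η))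
      (f' := fun y => deriv (deriv θ) y - deriv (deriv θ) η) (C := ε₂) (η := η) (k := 1)
      (fun y => (((h2.differentiable (by norm_num) y).hasDerivAt).sub_const _).sub
        (by convert ((hasDerivAt_id y).sub_const η).const_mul (deriv (deriv θ) η) using 1
            all_goals try rfl
            all_goals try simp only [id_eq]
            all_goals ring))
      ((h1.continuous).sub continuous_const)
      (fun y => by simpa using s1 y)
      (by simp)
  have s3 := T1
      (f := fun y => θ y - θ η - deriv θ η * (y - η) - deriv (deriv θ) η * (y - η) ^ 2 / 2)
      (f' := fun y => deriv θ y - deriv θ η - deriv (deriv θ) η * (y - η)) (C := ε₂ / 2)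
      (η := η) (k := 2)
      (fun y => by
        have hq : HasDerivAt (fun y => deriv (deriv θ) η * (y - η) ^ 2 / 2)
            (deriv (deriv θ) η * (y - η)) y := by
          convert ((((hasDerivAt_id y).sub_const η).pow 2).const_mul
            (deriv (deriv θ) η)).div_const 2 using 1
          all_goals try rfl
          all_goals try simp only [id_eq]
          all_goals push_cast
          all_goals ring
        exact (((hdθ y).hasDerivAt.sub_const _).sub
          (by convert ((hasDerivAt_id y).sub_const η).const_mul (deriv θ η) using 1
              all_goals try rfl
              all_goals try simp only [id_eq]
              all_goals ring)).sub hq)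
      ((h2.continuous.sub continuous_const).sub
        (continuous_const.mul (continuous_id.sub continuous_const)))
      (fun y => by
        have h := s2 y
        norm_num at h
        exact le_of_le_of_eq h (by rw [sq_abs]; ring))
      (by simp)
  rw [i2]
  have h := s3 x
  norm_num at h
  exact le_of_le_of_eq h (by ring)

lemma continuous_cexp : Continuous cexp :=
  Complex.continuous_exp.comp (continuous_const.mul Complex.continuous_ofReal)

/-- Frequency-domain chirplet transform with window `g`, applied to `xhat`. -/
noncomputable def fct (xhat g : ℝ → ℂ) (t η γ : ℝ) : ℂ :=
  ∫ ξ : ℝ, xhat (ξ + η) * g ξ * cexp (2 * π * ξ * t) * cexp (π * γ * ξ ^ 2)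

/-- `C(h)(t,γ) = ∫ h(ξ)e^{-i2πξt}e^{-iπγξ²}dξ`. -/
noncomputable def Cg (h : ℝ → ℂ) (t γ : ℝ) : ℂ :=
  ∫ ξ : ℝ, h ξ * cexp (-(2 * π * ξ * t)) * cexp (-(π * γ * ξ ^ 2))

/-- Window `ξ ↦ ξ^m g(ξ)`. -/
noncomputable def wm (g : ℝ → ℂ) (m : ℕ) : ℝ → ℂ := fun ξ => (ξ : ℂ) ^ m * g ξ

/-- `I_m = ∫ |ξ^m g(ξ)| dξ`. -/
noncomputable def Imom (g : ℝ → ℂ) (m : ℕ) : ℝ := ∫ ξ : ℝ, ‖wm g m ξ‖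

lemma wm_norm (g : ℝ → ℂ) (n : ℕ) (ξ : ℝ) : ‖wm g n ξ‖ = |ξ| ^ n * ‖g ξ‖ := by
  simp [wm, norm_mul, norm_pow, Complex.norm_real, Real.norm_eq_abs]

/-- Multicomponent approximation of the FCT. -/
theorem fct_multicomponent_approx (K : ℕ) (g : ℝ → ℂ) (B θ : Fin K → ℝ → ℝ)
    (ε₁ ε₂ : ℝ) (m : ℕ)
    (hB : ∀ l, ContDiff ℝ 1 (B l)) (hB1 : ∀ l, ∀ η : ℝ, |deriv (B l) η| ≤ ε₁)
    (hBpos : ∀ l, ∀ η : ℝ, 0 < B l η)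
    (hθ : ∀ l, ContDiff ℝ 3 (θ l)) (hθ3 : ∀ l, ∀ η : ℝ, |iteratedDeriv 3 (θ l) η| ≤ ε₂)
    (hintm : Integrable (wm g m)) (hintm1 : Integrable (wm g (m + 1)))
    (hintm3 : Integrable (wm g (m + 3)))
    (t η γ : ℝ) :
    ‖fct (fun u => ∑ l : Fin K, (B l u : ℂ) * cexp (-(2 * π * θ l u))) (wm g m) t η γ
        - ∑ l : Fin K, (B l η : ℂ) * cexp (-(2 * π * θ l η))
            * Cg (wm g m) (deriv (θ l) η - t) (iteratedDeriv 2 (θ l) η - γ)‖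
      ≤ ε₁ * K * Imom g (m + 1) + π / 3 * ε₂ * (∑ l : Fin K, B l η) * Imom g (m + 3) := by
  have hBlip : ∀ l (x y : ℝ), |B l x - B l y| ≤ ε₁ * |x - y| := by
    intro l x y
    have h := convex_univ.norm_image_sub_le_of_norm_deriv_le (f := B l) (C := ε₁)
      (fun u _ => (hB l).differentiable one_ne_zero u)
      (fun u _ => by simpa [Real.norm_eq_abs] using hB1 l u)
      (Set.mem_univ y) (Set.mem_univ x)
    simpa [Real.norm_eq_abs] using h
  set F : Fin K → ℝ → ℂ := fun l ξ =>
    (B l (ξ + η) : ℂ) * cexp (-(2 * π * θ l (ξ + η))) * wm g m ξ *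
      cexp (2 * π * ξ * t) * cexp (π * γ * ξ ^ 2) with hFdef
  set G : Fin K → ℝ → ℂ := fun l ξ =>
    (B l η : ℂ) * cexp (-(2 * π * θ l η)) *
      (wm g m ξ * cexp (-(2 * π * ξ * (deriv (θ l) η - t))) *
        cexp (-(π * (iteratedDeriv 2 (θ l) η - γ) * ξ ^ 2))) with hGdef
  -- pointwise bound
  have hpt : ∀ l ξ, ‖F l ξ - G l ξ‖ ≤
      ε₁ * ‖wm g (m + 1) ξ‖ + π * ε₂ / 3 * B l η * ‖wm g (m + 3) ξ‖ := by
    intro l ξ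
    set T : ℝ := θ l η + deriv (θ l) η * ξ + iteratedDeriv 2 (θ l) η * ξ ^ 2 / 2 with hT
    have hGalt : G l ξ = (B l η : ℂ) * cexp (-(2 * π * T)) *
        (wm g m ξ * cexp (2 * π * ξ * t) * cexp (π * γ * ξ ^ 2)) := by
      have e1 : cexp (-(2 * π * θ l η)) * cexp (-(2 * π * ξ * (deriv (θ l) η - t)))
            * cexp (-(π * (iteratedDeriv 2 (θ l) η - γ) * ξ ^ 2))
          = cexp (-(2 * π * T)) * cexp (2 * π * ξ * t) * cexp (π * γ * ξ ^ 2) := by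
        rw [← cexp_add, ← cexp_add, ← cexp_add, ← cexp_add]
        congr 1
        rw [hT]; ring
      calc G l ξ = (B l η : ℂ) * wm g m ξ *
            (cexp (-(2 * π * θ l η)) * cexp (-(2 * π * ξ * (deriv (θ l) η - t)))
              * cexp (-(π * (iteratedDeriv 2 (θ l) η - γ) * ξ ^ 2))) := by
            simp only [hGdef]; ring
        _ = (B l η : ℂ) * wm g m ξ *
            (cexp (-(2 * π * T)) * cexp (2 * π * ξ * t) * cexp (π * γ * ξ ^ 2)) := by rw [e1]
        _ = _ := by ring
    have hsplit : F l ξ - G l ξ =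
        ((B l (ξ + η) : ℂ) * cexp (-(2 * π * θ l (ξ + η)))
            - (B l η : ℂ) * cexp (-(2 * π * T))) *
          (wm g m ξ * cexp (2 * π * ξ * t) * cexp (π * γ * ξ ^ 2)) := by
      rw [hGalt]; simp only [hFdef]; ring
    have htay : |θ l (ξ + η) - T| ≤ ε₂ * |ξ| ^ 3 / 6 := by
      have h2 : θ l (ξ + η) - T = θ l (ξ + η) - θ l η - deriv (θ l) η * ξ
          - iteratedDeriv 2 (θ l) η * ξ ^ 2 / 2 := by rw [hT]; ring
      rw [h2]
      have h := taylor3 (hθ l) (hθ3 l) η (ξ + η)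
      simpa [add_sub_cancel_right] using h
    have hcexp : ‖cexp (-(2 * π * θ l (ξ + η))) - cexp (-(2 * π * T))‖
        ≤ π * ε₂ * |ξ| ^ 3 / 3 := by
      calc ‖cexp (-(2 * π * θ l (ξ + η))) - cexp (-(2 * π * T))‖
          ≤ |(-(2 * π * θ l (ξ + η))) - (-(2 * π * T))| := cexp_lip _ _
        _ = 2 * π * |θ l (ξ + η) - T| := by
            rw [show (-(2 * π * θ l (ξ + η))) - (-(2 * π * T))
                = -(2 * π * (θ l (ξ + η) - T)) by ring, abs_neg, abs_mul,
              abs_of_nonneg (by positivity : (0:ℝ) ≤ 2 * π)]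
        _ ≤ 2 * π * (ε₂ * |ξ| ^ 3 / 6) :=
            mul_le_mul_of_nonneg_left htay (by positivity)
        _ = π * ε₂ * |ξ| ^ 3 / 3 := by ring
    have hBb : ‖((B l (ξ + η) : ℂ)) - (B l η : ℂ)‖ ≤ ε₁ * |ξ| := by
      rw [← Complex.ofReal_sub, Complex.norm_real, Real.norm_eq_abs]
      simpa [add_sub_cancel_right] using hBlip l (ξ + η) η
    have hA : ‖(B l (ξ + η) : ℂ) * cexp (-(2 * π * θ l (ξ + η)))
          - (B l η : ℂ) * cexp (-(2 * π * T))‖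
        ≤ ε₁ * |ξ| + B l η * (π * ε₂ * |ξ| ^ 3 / 3) := by
      have hid : (B l (ξ + η) : ℂ) * cexp (-(2 * π * θ l (ξ + η)))
            - (B l η : ℂ) * cexp (-(2 * π * T))
          = ((B l (ξ + η) : ℂ) - (B l η : ℂ)) * cexp (-(2 * π * θ l (ξ + η)))
            + (B l η : ℂ) * (cexp (-(2 * π * θ l (ξ + η))) - cexp (-(2 * π * T))) := by ring
      rw [hid]
      refine (norm_add_le _ _).trans ?_
      rw [norm_mul, norm_mul, cexp_norm, mul_one, Complex.norm_real, Real.norm_eq_abs,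
        abs_of_pos (hBpos l η)]
      exact add_le_add hBb (mul_le_mul_of_nonneg_left hcexp (hBpos l η).le)
    rw [hsplit, norm_mul]
    have hw : ‖wm g m ξ * cexp (2 * π * ξ * t) * cexp (π * γ * ξ ^ 2)‖ = ‖wm g m ξ‖ := by
      rw [norm_mul, norm_mul, cexp_norm, cexp_norm, mul_one, mul_one]
    rw [hw]
    calc _ * ‖wm g m ξ‖ ≤ (ε₁ * |ξ| + B l η * (π * ε₂ * |ξ| ^ 3 / 3)) * ‖wm g m ξ‖ :=
        mul_le_mul_of_nonneg_right hA (norm_nonneg _)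
      _ = ε₁ * ‖wm g (m + 1) ξ‖ + π * ε₂ / 3 * B l η * ‖wm g (m + 3) ξ‖ := by
        rw [wm_norm, wm_norm, wm_norm]; ring
  -- integrability
  have hFint : ∀ l, Integrable (F l) := by
    intro l
    have c1 : Continuous fun ξ : ℝ => (B l (ξ + η) : ℂ) * cexp (-(2 * π * θ l (ξ + η))) := by
      apply Continuous.mul
      · exact Complex.continuous_ofReal.comp
          ((hB l).continuous.comp (continuous_id.add continuous_const))
      · exact continuous_cexp.comp
          ((continuous_const.mul ((hθ l).continuous.comp
            (continuous_id.add continuous_const))).neg)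
    have c2 : Continuous fun ξ : ℝ => cexp (2 * π * ξ * t) :=
      continuous_cexp.comp (by fun_prop)
    have c3 : Continuous fun ξ : ℝ => cexp (π * γ * ξ ^ 2) :=
      continuous_cexp.comp (by fun_prop)
    apply Integrable.mono' ((hintm.norm.const_mul (B l η)).add (hintm1.norm.const_mul ε₁))
    · exact ((c1.aestronglyMeasurable.mul hintm.1).mul c2.aestronglyMeasurable).mul
        c3.aestronglyMeasurable
    · filter_upwards with ξ
      have hnF : ‖F l ξ‖ = B l (ξ + η) * ‖wm g m ξ‖ := by
        simp only [hFdef]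
        rw [norm_mul, norm_mul, norm_mul, norm_mul, cexp_norm, cexp_norm, cexp_norm,
          Complex.norm_real, Real.norm_eq_abs, abs_of_pos (hBpos l _), mul_one, mul_one, mul_one]
      rw [hnF]
      have hBle : B l (ξ + η) ≤ B l η + ε₁ * |ξ| := by
        have h := hBlip l (ξ + η) η
        rw [add_sub_cancel_right] at h
        have := abs_le.mp h
        linarith [this.2]
      calc B l (ξ + η) * ‖wm g m ξ‖ ≤ (B l η + ε₁ * |ξ|) * ‖wm g m ξ‖ :=
          mul_le_mul_of_nonneg_right hBle (norm_nonneg _)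
        _ = B l η * ‖wm g m ξ‖ + ε₁ * ‖wm g (m + 1) ξ‖ := by
          rw [wm_norm, wm_norm]; ring
  have hGint : ∀ l, Integrable (G l) := by
    intro l
    have c2 : Continuous fun ξ : ℝ => cexp (-(2 * π * ξ * (deriv (θ l) η - t))) :=
      continuous_cexp.comp (by fun_prop)
    have c3 : Continuous fun ξ : ℝ => cexp (-(π * (iteratedDeriv 2 (θ l) η - γ) * ξ ^ 2)) :=
      continuous_cexp.comp (by fun_prop)
    apply Integrable.mono' (hintm.norm.const_mul (B l η))
    · exact aestronglyMeasurable_const.mul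
        ((hintm.1.mul c2.aestronglyMeasurable).mul c3.aestronglyMeasurable)
    · filter_upwards with ξ
      simp only [hGdef]
      rw [norm_mul, norm_mul, norm_mul, norm_mul, cexp_norm, cexp_norm, cexp_norm,
        Complex.norm_real, Real.norm_eq_abs, abs_of_pos (hBpos l _)]
      simp
  -- identify the two terms
  have hfct : fct (fun u => ∑ l : Fin K, (B l u : ℂ) * cexp (-(2 * π * θ l u)))
      (wm g m) t η γ = ∑ l : Fin K, ∫ ξ : ℝ, F l ξ := by
    have hi : ∀ ξ : ℝ, (∑ l : Fin K, (B l (ξ + η) : ℂ) * cexp (-(2 * π * θ l (ξ + η))))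
        * wm g m ξ * cexp (2 * π * ξ * t) * cexp (π * γ * ξ ^ 2) = ∑ l : Fin K, F l ξ := by
      intro ξ
      rw [Finset.sum_mul, Finset.sum_mul, Finset.sum_mul]
    simp only [fct]
    simp only [hi]
    exact integral_finset_sum Finset.univ fun l _ => hFint l
  have hCgl : ∀ l : Fin K, (B l η : ℂ) * cexp (-(2 * π * θ l η))
      * Cg (wm g m) (deriv (θ l) η - t) (iteratedDeriv 2 (θ l) η - γ)
      = ∫ ξ : ℝ, G l ξ := by
    intro l
    simp only [Cg, hGdef]
    rw [← integral_const_mul]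
  have key : fct (fun u => ∑ l : Fin K, (B l u : ℂ) * cexp (-(2 * π * θ l u))) (wm g m) t η γ
      - ∑ l : Fin K, (B l η : ℂ) * cexp (-(2 * π * θ l η))
          * Cg (wm g m) (deriv (θ l) η - t) (iteratedDeriv 2 (θ l) η - γ)
      = ∑ l : Fin K, ∫ ξ : ℝ, (F l ξ - G l ξ) := by
    rw [hfct, Finset.sum_congr rfl fun l _ => hCgl l, ← Finset.sum_sub_distrib]
    exact Finset.sum_congr rfl fun l _ => (integral_sub (hFint l) (hGint l)).symm
  rw [key]
  calc ‖∑ l : Fin K, ∫ ξ : ℝ, (F l ξ - G l ξ)‖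
      ≤ ∑ l : Fin K, ‖∫ ξ : ℝ, (F l ξ - G l ξ)‖ := norm_sum_le _ _
    _ ≤ ∑ l : Fin K, (ε₁ * Imom g (m + 1) + π * ε₂ / 3 * B l η * Imom g (m + 3)) := by
        apply Finset.sum_le_sum
        intro l _
        have hbound : Integrable (fun ξ : ℝ => ε₁ * ‖wm g (m + 1) ξ‖
            + π * ε₂ / 3 * B l η * ‖wm g (m + 3) ξ‖) volume :=
          (hintm1.norm.const_mul ε₁).add (hintm3.norm.const_mul (π * ε₂ / 3 * B l η))
        have hbd := norm_integral_le_of_norm_le hbound (Filter.Eventually.of_forall (hpt l))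
        refine hbd.trans (le_of_eq ?_)
        rw [integral_add (hintm1.norm.const_mul ε₁) (hintm3.norm.const_mul _),
          integral_const_mul, integral_const_mul]
        rfl
    _ = ε₁ * K * Imom g (m + 1) + π / 3 * ε₂ * (∑ l : Fin K, B l η) * Imom g (m + 3) := by
        rw [Finset.sum_add_distrib, Finset.sum_const, Finset.card_univ, Fintype.card_fin,
          nsmul_eq_mul]
        rw [Finset.sum_congr rfl fun (l : Fin K) _ =>
          (show π * ε₂ / 3 * B l η * Imom g (m + 3)
            = B l η * (π / 3 * ε₂ * Imom g (m + 3)) by ring), ← Finset.sum_mul]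
        ring
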